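/- arXiv:2110.14358 — 2 statements merged into one kernel-verified Lean document; each statement's English description precedes it below -/
import Mathlib

section
/- For every Ferrers graph G there exists a finite subset V of the positive integers, with odd minimum and even maximum, such that Gamma_V is graph-isomorphic to G. -/
attribute [local instance] Classical.propDecidable

noncomputable section

/-- A Ferrers graph, encoded by its biadjacency pattern between row vertices
`r_1, …, r_n` (indexed by `Fin n`) and column vertices `c_1, …, c_m`. -/
structure FerrersGraph where
  n : ℕ
  m : ℕ
  hn : 0 < n
  hm : 0 < m
  adj : Fin n → Fin m → Prop
  mono : ∀ i i' : Fin n, ∀ j j' : Fin m, adj i j → i ≤ i' → j' ≤ j → adj i' j'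
  corner1 : adj ⟨0, hn⟩ ⟨0, hm⟩
  corner2 : adj ⟨n - 1, Nat.sub_lt hn one_pos⟩ ⟨m - 1, Nat.sub_lt hm one_pos⟩

def FerrersGraph.graph (G : FerrersGraph) : SimpleGraph (Fin G.n ⊕ Fin G.m) :=
  SimpleGraph.fromRel fun u v =>
    match u, v with
    | Sum.inl i, Sum.inr j => G.adj i j
    | _, _ => False

def GammaGraph (V : Finset ℕ) : SimpleGraph ↥V :=
  SimpleGraph.fromRel fun a b => Odd (a : ℕ) ∧ Even (b : ℕ) ∧ (a : ℕ) < (b : ℕ)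

/-!
Label row `i` of degree `d_i` by `2n (m - d_i) + 2i + 1` and column `j` by `2n (m - j)`.
Rows get odd and columns even labels, and since `2i + 1 < 2n`, comparing a row label with a
column label compares `m - d_i` with `m - j`: row `i` gets below column `j` exactly when
`j < d_i`, i.e. when `r_i c_j` is an edge. So `Γ_V` on the set `V` of labels is the Ferrers
graph. The last row is adjacent to every column and the first column to every row, so the
least label is a row label and the largest one a column label.
-/

open Finset

theorem Nat.mul_add_lt_mul_iff_of_lt {K a b r : ℕ} (hr : r < K) :
    K * a + r < K * b ↔ a < b := by
  have hK : 0 < K := by omega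
  rw [mul_comm K b, ← Nat.div_lt_iff_lt_mul hK, Nat.mul_add_div hK, Nat.div_eq_of_lt hr,
    add_zero]

theorem Finset.exists_odd_min_of_forall_even_gt {V : Finset ℕ} {a : ℕ} (ha : a ∈ V)
    (h : ∀ v ∈ V, Even v → a < v) : ∃ o ∈ V, Odd o ∧ ∀ v ∈ V, o ≤ v := by
  have hV : V.Nonempty := ⟨a, ha⟩
  refine ⟨V.min' hV, V.min'_mem hV, ?_, fun v hv => V.min'_le v hv⟩
  by_contra hodd
  have := h _ (V.min'_mem hV) (Nat.not_odd_iff_even.mp hodd)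
  exact (V.min'_le a ha).not_gt this

def GammaGraph.isoOfInjective {α : Type*} [Fintype α] {f : α → ℕ} (hf : Function.Injective f) :
    SimpleGraph.fromRel (fun x y => Odd (f x) ∧ Even (f y) ∧ f x < f y) ≃g
      GammaGraph (univ.image f) where
  toEquiv := Equiv.ofBijective (fun x => ⟨f x, mem_image_of_mem f (mem_univ x)⟩)
    ⟨fun x y h => hf (Subtype.ext_iff.1 h), by
      rintro ⟨v, hv⟩
      obtain ⟨x, -, rfl⟩ := mem_image.1 hv
      exact ⟨x, rfl⟩⟩
  map_rel_iff' {x y} := by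
    change (GammaGraph _).Adj ⟨f x, _⟩ ⟨f y, _⟩ ↔ _
    simp [GammaGraph, hf.eq_iff]

namespace FerrersGraph

variable (G : FerrersGraph)

def rowDegree (i : Fin G.n) : ℕ := #{j | G.adj i j}

def lastRow : Fin G.n := ⟨G.n - 1, Nat.sub_lt G.hn one_pos⟩

def firstCol : Fin G.m := ⟨0, G.hm⟩

def label : Fin G.n ⊕ Fin G.m → ℕ
  | .inl i => 2 * G.n * (G.m - G.rowDegree i) + (2 * i + 1)
  | .inr j => 2 * G.n * (G.m - j)

variable {G}

theorem adj_iff_lt_rowDegree {i : Fin G.n} {j : Fin G.m} :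
    G.adj i j ↔ (j : ℕ) < G.rowDegree i := by
  constructor
  · intro h
    have : Iic j ⊆ ({k | G.adj i k} : Finset _) := fun k hk =>
      mem_filter.2 ⟨mem_univ _, G.mono i i j k h le_rfl (mem_Iic.1 hk)⟩
    exact Nat.lt_of_succ_le ((Fin.card_Iic j).symm.trans_le (card_le_card this))
  · contrapose
    intro hj
    have : ({k | G.adj i k} : Finset _) ⊆ Iio j := fun k hk =>
      mem_Iio.2 (lt_of_not_ge fun hjk => hj (G.mono i i k j (mem_filter.1 hk).2 le_rfl hjk))
    exact not_lt.2 ((card_le_card this).trans_eq (Fin.card_Iio j))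

theorem rowDegree_le (i : Fin G.n) : G.rowDegree i ≤ G.m :=
  (card_filter_le _ _).trans_eq (card_fin _)

theorem adj_firstCol (i : Fin G.n) : G.adj i G.firstCol :=
  G.mono _ i _ _ G.corner1 (Nat.zero_le _) le_rfl

theorem adj_lastRow (j : Fin G.m) : G.adj G.lastRow j :=
  G.mono _ _ _ j G.corner2 le_rfl (Nat.le_sub_one_of_lt j.isLt)

theorem odd_label_inl (i : Fin G.n) : Odd (G.label (.inl i)) := by
  simp [label, parity_simps]

theorem even_label_inr (j : Fin G.m) : Even (G.label (.inr j)) := by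
  simp [label, parity_simps]

theorem label_inl_lt_label_inr_iff {i : Fin G.n} {j : Fin G.m} :
    G.label (.inl i) < G.label (.inr j) ↔ G.adj i j := by
  rw [adj_iff_lt_rowDegree, label, label, Nat.mul_add_lt_mul_iff_of_lt (by omega)]
  have := G.rowDegree_le i
  omega

theorem label_injective : Function.Injective G.label := by
  rintro (i | j) (i' | j') h
  · have h := congrArg (· % (2 * G.n)) h
    simp only [label, Nat.mul_add_mod, Nat.mod_eq_of_lt (show 2 * (i : ℕ) + 1 < 2 * G.n by omega),
      Nat.mod_eq_of_lt (show 2 * (i' : ℕ) + 1 < 2 * G.n by omega)] at h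
    exact congrArg _ (Fin.ext (by omega))
  · exact absurd (h ▸ odd_label_inl i) (Nat.not_odd_iff_even.2 (even_label_inr j'))
  · exact absurd (h ▸ even_label_inr j) (Nat.not_even_iff_odd.2 (odd_label_inl i'))
  · have := Nat.eq_of_mul_eq_mul_left (Nat.mul_pos two_pos G.hn) h
    exact congrArg _ (Fin.ext (by omega))

theorem label_lastRow_lt_of_even {x : Fin G.n ⊕ Fin G.m} (hx : Even (G.label x)) :
    G.label (.inl G.lastRow) < G.label x := by
  rcases x with i | j
  · exact absurd hx (Nat.not_even_iff_odd.2 (odd_label_inl i))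
  · exact label_inl_lt_label_inr_iff.2 (adj_lastRow j)

theorem label_le_label_firstCol (x : Fin G.n ⊕ Fin G.m) :
    G.label x ≤ G.label (.inr G.firstCol) := by
  rcases x with i | j
  · exact (label_inl_lt_label_inr_iff.2 (adj_firstCol i)).le
  · exact Nat.mul_le_mul_left _ (Nat.sub_le _ _)

theorem graph_eq_fromRel_label :
    G.graph =
      SimpleGraph.fromRel fun x y => Odd (G.label x) ∧ Even (G.label y) ∧ G.label x < G.label y := by
  unfold graph
  congr
  ext (i | j) (i' | j')
  · simp [Nat.not_even_iff_odd.2 (odd_label_inl i')]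
  · simp [odd_label_inl, even_label_inr, label_inl_lt_label_inr_iff]
  · simp [Nat.not_odd_iff_even.2 (even_label_inr j)]
  · simp [Nat.not_odd_iff_even.2 (even_label_inr j)]

end FerrersGraph

/-- For every Ferrers graph `G` there is a finite set `V` of positive integers, with
odd minimum and even maximum, such that `Γ_V` is isomorphic to `G`. -/
theorem exists_gammaGraph_iso_ferrers (G : FerrersGraph) :
    ∃ V : Finset ℕ, (∀ v ∈ V, 0 < v) ∧
      (∃ o ∈ V, Odd o ∧ ∀ v ∈ V, o ≤ v) ∧
      (∃ e ∈ V, Even e ∧ ∀ v ∈ V, v ≤ e) ∧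
      Nonempty (GammaGraph V ≃g G.graph) := by
  obtain ⟨o, ho, hodd, hmin⟩ := exists_odd_min_of_forall_even_gt
    (mem_image_of_mem G.label (mem_univ (.inl G.lastRow)))
    (forall_mem_image.2 fun x _ => G.label_lastRow_lt_of_even)
  refine ⟨univ.image G.label, fun v hv => hodd.pos.trans_le (hmin v hv), ⟨o, ho, hodd, hmin⟩,
    ⟨_, mem_image_of_mem _ (mem_univ (.inr G.firstCol)), G.even_label_inr _,
      forall_mem_image.2 fun x _ => G.label_le_label_firstCol x⟩, ?_⟩
  rw [G.graph_eq_fromRel_label]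
  exact ⟨(GammaGraph.isoOfInjective G.label_injective).symm⟩

end
end

section
/- For all k >= 1, sum_{n>=1} ch(K_{n,k})(t) u^n = sum_{n>=1} [(t)_n ((t-n)^k + (n-1)(t-(n-1))^{k-1}) u^n] / prod_{i=0}^{n-1} (1 - iu), where ch(K_{n,k})(t) is the chromatic polynomial of the complete bipartite graph K_{n,k} and (t)_n = t(t-1)...(t-n+1). -/
attribute [local instance] Classical.propDecidable

noncomputable section

/-!
A proper colouring of `K_{n,k}` with `t` colours is a map `f` on the `n`-side together with a map
on the `k`-side avoiding the image of `f`. Grouping by the size `a` of that image, and counting the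
maps onto a fixed `a`-set by Stirling numbers of the second kind, gives
`ch(K_{n,k})(t) = ∑_a S(n, a) (t)_a (t - a)^k`.

On the other side, `1 / ∏_{i<n} (1 - iu) = ∑_m S(m + n - 1, n - 1) u^m`, so the coefficient of
`u^N` on the right is `∑_n S(N - 1, n - 1) (t)_n ((t - n)^k + (n - 1)(t - n + 1)^{k-1})`.
The recurrence `S(N, a) = S(N - 1, a - 1) + a S(N - 1, a)` splits the left side into two sums,
and after shifting the index of the second one and using `(t)_n = (t)_{n-1} (t - n + 1)` they
match the two terms on the right.
-/

open Finset

lemma Fin.image_cons_univ {β : Type*} [DecidableEq β] {n : ℕ} (v : β) (f : Fin n → β) :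
    univ.image (Fin.cons v f : Fin (n + 1) → β) = insert v (univ.image f) := by
  apply coe_injective
  push_cast [coe_image, coe_univ, Set.image_univ]
  exact Fin.range_cons v f

section ImageCard

variable {β : Type*} [Fintype β] [DecidableEq β]

lemma card_filter_card_insert_eq (A : Finset β) (a : ℕ) :
    #{v | #(insert v A) = a} =
      (if #A = a then a else 0) + (if #A + 1 = a then Fintype.card β + 1 - a else 0) := by
  rw [card_filter, ← sum_add_sum_compl A]
  have h_in : ∀ v ∈ A, (if #(insert v A) = a then 1 else 0) = if #A = a then 1 else 0 :=
    fun v hv => by rw [insert_eq_of_mem hv]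
  have h_out : ∀ v ∈ Aᶜ, (if #(insert v A) = a then 1 else 0) = if #A + 1 = a then 1 else 0 :=
    fun v hv => by rw [card_insert_of_notMem (mem_compl.mp hv)]
  rw [sum_congr rfl h_in, sum_congr rfl h_out, sum_const, sum_const, card_compl]
  split_ifs <;> simp only [smul_eq_mul] <;> omega

lemma card_filter_card_image_cons (N a : ℕ) :
    #{g : Fin (N + 1) → β | #(univ.image g) = a} =
      ∑ f : Fin N → β, #{v | #(insert v (univ.image f)) = a} := by
  rw [card_filter, ← (Fin.consEquiv fun _ => β).sum_comp, Fintype.sum_prod_type, sum_comm]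
  refine sum_congr rfl fun f _ => ?_
  rw [card_filter]
  exact sum_congr rfl fun v _ => by rw [← Fin.image_cons_univ]; rfl

theorem card_filter_card_image_fin (N a : ℕ) :
    #{f : Fin N → β | #(univ.image f) = a} =
      N.stirlingSecond a * (Fintype.card β).descFactorial a := by
  induction N generalizing a with
  | zero => cases a <;> simp [Nat.stirlingSecond]
  | succ N ih =>
    simp only [card_filter_card_image_cons, card_filter_card_insert_eq, sum_add_distrib,
      ← sum_filter, sum_const, smul_eq_mul, ih]
    cases a with
    | zero => simp
    | succ b =>
      simp only [Nat.add_right_cancel_iff, ih, Nat.add_sub_add_right,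
        Nat.stirlingSecond_succ_succ, Nat.descFactorial_succ]
      ring

theorem card_filter_card_image {α : Type*} [Fintype α] (a : ℕ) :
    #{f : α → β | #(univ.image f) = a} =
      (Fintype.card α).stirlingSecond a * (Fintype.card β).descFactorial a := by
  set e := Fintype.equivFin α
  rw [← card_filter_card_image_fin]
  refine card_equiv (e.arrowCongr (Equiv.refl β)) fun f => ?_
  have h_image : univ.image (f ∘ e.symm) = univ.image f := by
    rw [← image_image, image_univ_equiv]
  simp only [mem_filter, mem_univ, true_and]
  exact iff_of_eq (congrArg (#· = a) h_image.symm)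

end ImageCard

section CompleteBipartite

variable {V W C : Type*}

def completeBipartiteGraph.coloringEquiv :
    (completeBipartiteGraph V W).Coloring C ≃
      {p : (V → C) × (W → C) // ∀ v w, p.1 v ≠ p.2 w} where
  toFun c := ⟨(c ∘ Sum.inl, c ∘ Sum.inr), fun _ _ => c.valid (by simp)⟩
  invFun p := SimpleGraph.Coloring.mk (Sum.elim p.1.1 p.1.2) <| by
    rintro (v | w) (v' | w') h
    · simp at h
    · exact p.2 v w'
    · exact (p.2 v' w).symm
    · simp at h
  left_inv c := by ext (v | w) <;> rfl
  right_inv p := rfl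

variable [Fintype V] [Fintype W] [Fintype C] [DecidableEq C]

lemma card_filter_forall_ne_eq (f : V → C) :
    #{g : W → C | ∀ v w, f v ≠ g w} =
      (Fintype.card C - #(univ.image f)) ^ Fintype.card W := by
  have h_pi : ({g : W → C | ∀ v w, f v ≠ g w} : Finset _) =
      Fintype.piFinset fun _ => (univ.image f)ᶜ := by
    ext g
    simp only [mem_filter, mem_univ, true_and, Fintype.mem_piFinset, mem_compl, mem_image]
    grind
  rw [h_pi, Fintype.card_piFinset, prod_const, card_compl, card_univ]

theorem card_coloring_completeBipartiteGraph :
    Nat.card ((completeBipartiteGraph V W).Coloring C) =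
      ∑ a ∈ range (Fintype.card V + 1), (Fintype.card V).stirlingSecond a *
        (Fintype.card C).descFactorial a * (Fintype.card C - a) ^ Fintype.card W := by
  have h_maps :
      ∀ f ∈ (univ : Finset (V → C)), #(univ.image f) ∈ range (Fintype.card V + 1) :=
    fun f _ => mem_range_succ_iff.mpr (card_image_le.trans_eq (card_univ))
  rw [Nat.card_congr completeBipartiteGraph.coloringEquiv, Nat.card_eq_fintype_card,
    Fintype.card_subtype, card_filter, Fintype.sum_prod_type]
  simp only [← card_filter, card_filter_forall_ne_eq]
  rw [← sum_fiberwise_of_maps_to h_maps]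
  refine sum_congr rfl fun a _ => ?_
  rw [sum_congr rfl fun f hf => by rw [(mem_filter.mp hf).2], sum_const, smul_eq_mul,
    card_filter_card_image]

end CompleteBipartite

section PowerSeries

open PowerSeries

variable {R : Type*} [CommRing R]

lemma one_sub_mul_X_mul_mk_stirlingSecond (n : ℕ) :
    (1 - C ((n + 1 : ℕ) : R) * X) *
        PowerSeries.mk (fun m => ((m + (n + 1)).stirlingSecond (n + 1) : R)) =
      PowerSeries.mk fun m => ((m + n).stirlingSecond n : R) := by
  ext (_ | m)
  · simp [Nat.stirlingSecond_self]
  · rw [sub_mul, one_mul, mul_assoc, map_sub, coeff_C_mul, coeff_succ_X_mul, coeff_mk, coeff_mk,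
      coeff_mk, sub_eq_iff_eq_add, show m + 1 + (n + 1) = m + n + 1 + 1 by omega,
      show m + (n + 1) = m + n + 1 by omega, show m + 1 + n = m + n + 1 by omega,
      Nat.stirlingSecond_succ_succ]
    push_cast
    ring

lemma prod_one_sub_mul_X_mul_mk_stirlingSecond (n : ℕ) :
    (∏ i ∈ range (n + 1), (1 - C (i : R) * X)) *
      PowerSeries.mk (fun m => ((m + n).stirlingSecond n : R)) = 1 := by
  induction n with
  | zero =>
    ext m
    cases m <;> simp [Nat.stirlingSecond]
  | succ n ih =>
    rw [prod_range_succ, mul_assoc, one_sub_mul_X_mul_mk_stirlingSecond, ih]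

theorem coeff_invOfUnit_prod_one_sub_mul_X (n m : ℕ) :
    coeff m (invOfUnit (∏ i ∈ range (n + 1), (1 - C (i : R) * X) : R⟦X⟧) 1) =
      (m + n).stirlingSecond n := by
  have h_const :
      constantCoeff (∏ i ∈ range (n + 1), (1 - C (i : R) * X) : R⟦X⟧) = ↑(1 : Rˣ) := by
    simp
  rw [left_inv_eq_right_inv (invOfUnit_mul _ 1 h_const)
    (prod_one_sub_mul_X_mul_mk_stirlingSecond n), coeff_mk]

end PowerSeries

section Rearrangement

open Polynomial

variable {R : Type*} [CommRing R]

lemma descPochhammer_eq_prod_range (n : ℕ) :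
    descPochhammer R n = ∏ j ∈ range n, (X - (j : R[X])) := by
  induction n with
  | zero => simp
  | succ n ih => rw [descPochhammer_succ_right, ih, prod_range_succ]

theorem sum_stirlingSecond_succ_mul_descPochhammer (M k : ℕ) :
    ∑ a ∈ range (M + 2), ((M + 1).stirlingSecond a : R[X]) *
        (descPochhammer R a * (X - (a : R[X])) ^ (k + 1)) =
      ∑ b ∈ range (M + 1), (M.stirlingSecond b : R[X]) *
        (descPochhammer R (b + 1) * ((X - ((b + 1 : ℕ) : R[X])) ^ (k + 1) +
          (b : R[X]) * (X - (b : R[X])) ^ k)) := by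
  set T : ℕ → R[X] := fun a => descPochhammer R a * (X - (a : R[X])) ^ (k + 1)
  set U : ℕ → R[X] := fun c => c * M.stirlingSecond c * T c
  have h_shift : ∑ b ∈ range (M + 1), U (b + 1) = ∑ c ∈ range (M + 1), U c := by
    have h0 : U 0 = 0 := by simp [U]
    have hM : U (M + 1) = 0 := by simp [U, Nat.stirlingSecond_eq_zero_of_lt]
    rw [← add_zero (∑ b ∈ range (M + 1), U (b + 1)), ← h0, ← sum_range_succ',
      sum_range_succ, hM, add_zero]
  calc ∑ a ∈ range (M + 2), ((M + 1).stirlingSecond a : R[X]) * T a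
      = ∑ b ∈ range (M + 1), ((M.stirlingSecond b : R[X]) * T (b + 1) + U (b + 1)) := by
        rw [sum_range_succ']
        simp only [Nat.stirlingSecond_succ_succ, Nat.stirlingSecond_succ_zero, U]
        push_cast
        simp only [zero_mul, add_zero]
        exact sum_congr rfl fun b _ => by ring
    _ = ∑ b ∈ range (M + 1), ((M.stirlingSecond b : R[X]) * T (b + 1) + U b) := by
        rw [sum_add_distrib, sum_add_distrib, h_shift]
    _ = _ := by
        refine sum_congr rfl fun b _ => ?_
        simp only [T, U, descPochhammer_succ_right]
        ring

end Rearrangement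

lemma Finset.sum_Icc_one_eq_sum_range {M : Type*} [AddCommMonoid M] (f : ℕ → M) (n : ℕ) :
    ∑ i ∈ Icc 1 n, f i = ∑ i ∈ range n, f (i + 1) := by
  rw [range_eq_Ico, sum_Ico_add', zero_add, Ico_add_one_right_eq_Icc]

section ChromaticPolynomial

open Polynomial

lemma Nat.cast_descFactorial_mul_sub_pow {R : Type*} [CommRing R] (q a k : ℕ) :
    ((q.descFactorial a * (q - a) ^ k : ℕ) : R) =
      (descPochhammer R a).eval (q : R) * ((q : R) - a) ^ k := by
  rw [descPochhammer_eval_eq_descFactorial]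
  rcases le_or_gt a q with h | h
  · push_cast [Nat.cast_sub h]
    ring
  · simp [Nat.descFactorial_eq_zero_iff_lt.mpr h]

theorem eq_sum_stirlingSecond_of_eval_eq_card_coloring {R V W : Type*} [CommRing R] [IsDomain R]
    [CharZero R] [Fintype V] [Fintype W] (P : R[X])
    (hP : ∀ q : ℕ, P.eval (q : R) = Nat.card ((completeBipartiteGraph V W).Coloring (Fin q))) :
    P = ∑ a ∈ range (Fintype.card V + 1), ((Fintype.card V).stirlingSecond a : R[X]) *
      (descPochhammer R a * (X - (a : R[X])) ^ Fintype.card W) := by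
  refine eq_of_infinite_eval_eq _ _ ((Set.infinite_range_of_injective Nat.cast_injective).mono ?_)
  rintro _ ⟨q, rfl⟩
  rw [Set.mem_ofPred_eq, hP, card_coloring_completeBipartiteGraph, Nat.cast_sum, eval_finsetSum]
  refine sum_congr rfl fun a _ => ?_
  rw [Fintype.card_fin, mul_assoc, Nat.cast_mul, Nat.cast_descFactorial_mul_sub_pow]
  simp

end ChromaticPolynomial

open PowerSeries Polynomial in
/-- For all `k ≥ 1`,
`∑_{n≥1} ch(K_{n,k})(t) u^n
  = ∑_{n≥1} (t)_n ((t-n)^k + (n-1)(t-(n-1))^{k-1}) u^n / ∏_{i=0}^{n-1} (1 - iu)`,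
where `ch(K_{n,k})` is the chromatic polynomial of the complete bipartite graph
`K_{n,k}`; the identity of power series in `u` over `ℚ[t]` is stated coefficientwise
(the coefficient of `u^N` of the `n`-th summand on the right vanishes for `n > N`). -/
theorem chromatic_completeBipartite_generating_function (k : ℕ) (hk : 1 ≤ k)
    (ch : ℕ → Polynomial ℚ)
    (hch : ∀ n, 1 ≤ n → ∀ q : ℕ,
      (ch n).eval (q : ℚ) =
        (Nat.card ((completeBipartiteGraph (Fin n) (Fin k)).Coloring
          (Fin q)) : ℚ)) :
    ∀ N : ℕ,
      (PowerSeries.coeff (R := Polynomial ℚ) N) (PowerSeries.mk fun j =>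
          if j = 0 then 0 else ch j) =
      ∑ n ∈ Finset.Icc 1 N, (PowerSeries.coeff (R := Polynomial ℚ) N)
        ((PowerSeries.C (R := Polynomial ℚ)) ((∏ j ∈ Finset.range n,
              (Polynomial.X - (j : Polynomial ℚ))) *
            ((Polynomial.X - (n : Polynomial ℚ)) ^ k +
              ((n : Polynomial ℚ) - 1) *
                (Polynomial.X - ((n : Polynomial ℚ) - 1)) ^ (k - 1))) *
          PowerSeries.X ^ n *
          PowerSeries.invOfUnit
            (∏ i ∈ Finset.range n,
              (1 - (PowerSeries.C (R := Polynomial ℚ)) (i : Polynomial ℚ) * PowerSeries.X)) 1) := by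
  rintro (_ | M)
  · simp
  obtain ⟨k, rfl⟩ := Nat.exists_eq_add_of_le' hk
  rw [coeff_mk, if_neg M.succ_ne_zero,
    eq_sum_stirlingSecond_of_eval_eq_card_coloring _ (hch (M + 1) M.succ_pos), Fintype.card_fin,
    Fintype.card_fin, sum_stirlingSecond_succ_mul_descPochhammer, sum_Icc_one_eq_sum_range]
  refine sum_congr rfl fun b hb => ?_
  have hbM : b ≤ M := Nat.lt_succ_iff.mp (mem_range.mp hb)
  rw [mul_assoc, PowerSeries.coeff_C_mul, PowerSeries.coeff_X_pow_mul', if_pos (by omega),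
    coeff_invOfUnit_prod_one_sub_mul_X, show M + 1 - (b + 1) + b = M by omega,
    ← descPochhammer_eq_prod_range]
  push_cast
  ring

end
end
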